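/- Let x ≥ 1 and y > 0 be reals, let f : ℕ → ℂ be supported on the integers in [1, x], and let α, β be real. Then Σ_{n ∈ ℤ} (Σ_{n < m ≤ n+y} f(m) e(αm)) · e(βn) = F(x; α + β) · E_y(−β), where the outer sum over integers n has only finitely many nonzero terms (all with −y < n < x). -/

import Mathlib

/-!
Writing the window `(n, n + y]` as `{n + k : 1 ≤ k ≤ ⌊y⌋}`, each term is
`∑_k f(n+k) e((α+β)(n+k)) e(-βk)`. Exchanging the finite `k`-sum with the sum over `n ∈ ℤ` and
translating `n ↦ n - k` turns the `k`-th summand into `F(x; α+β) e(-βk)`.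
-/

open Finset

noncomputable def e (β : ℝ) : ℂ := Complex.exp (2 * Real.pi * Complex.I * β)

lemma e_add (a b : ℝ) : e (a + b) = e a * e b := by
  simp only [e, ← Complex.exp_add]
  push_cast
  ring_nf

theorem Summable.tsum_sum_comp_add_mul {G ι α : Type*} [AddCommGroup G]
    [NonUnitalNonAssocSemiring α] [TopologicalSpace α] [IsTopologicalSemiring α] [T2Space α]
    {g : G → α} (hg : Summable g) (s : Finset ι) (φ : ι → G) (c : ι → α) :
    ∑' n, ∑ k ∈ s, g (n + φ k) * c k = (∑' m, g m) * ∑ k ∈ s, c k := by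
  have hshift : ∀ k, Summable fun n => g (n + φ k) := fun k =>
    (Equiv.addRight (φ k)).summable_iff.mpr hg
  rw [Summable.tsum_finsetSum fun k _ => (hshift k).mul_right (c k), mul_sum]
  refine sum_congr rfl fun k _ => ?_
  rw [(hshift k).tsum_mul_right]
  exact congrArg (· * c k) ((Equiv.addRight (φ k)).tsum_eq g)

lemma Int.sum_Ioc_add_natCast {M : Type*} [AddCommMonoid M] (h : ℤ → M) (n : ℤ) (Y : ℕ) :
    ∑ m ∈ Ioc n (n + Y), h m = ∑ k ∈ Icc 1 Y, h (n + k) := by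
  refine (sum_nbij' (fun k : ℕ => n + k) (fun m => (m - n).toNat) ?_ ?_ ?_ ?_ ?_).symm <;>
    intro k hk <;> simp only [mem_Icc, mem_Ioc] at * <;> omega

section Support

variable {x : ℝ} {f : ℕ → ℂ} (hf : ∀ m : ℕ, f m ≠ 0 → 1 ≤ m ∧ (m : ℝ) ≤ x)
include hf

lemma apply_toNat_mul_eq_zero (w : ℤ → ℂ) {m : ℤ}
    (hm : m ∉ (Icc 1 ⌊x⌋₊).map Nat.castEmbedding) : f m.toNat * w m = 0 := by
  by_contra h
  obtain ⟨h1, hle⟩ := hf _ (left_ne_zero_of_mul h)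
  exact hm (mem_map.mpr ⟨m.toNat, mem_Icc.mpr ⟨h1, Nat.le_floor hle⟩, by simp; omega⟩)

lemma summable_apply_toNat_mul (w : ℤ → ℂ) : Summable fun m : ℤ => f m.toNat * w m :=
  summable_of_ne_finset_zero fun _ => apply_toNat_mul_eq_zero hf w

lemma tsum_apply_toNat_mul (w : ℤ → ℂ) :
    ∑' m : ℤ, f m.toNat * w m = ∑ n ∈ Icc 1 ⌊x⌋₊, f n * w n := by
  rw [tsum_eq_sum fun _ => apply_toNat_mul_eq_zero hf w, sum_map]
  rfl

end Support

theorem fourier_transform_short_interval_sum_general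
    (x y : ℝ) (hy : 0 < y) (f : ℕ → ℂ)
    (hf : ∀ m : ℕ, f m ≠ 0 → 1 ≤ m ∧ (m : ℝ) ≤ x) (α β : ℝ) :
    ∑' n : ℤ, (∑ m ∈ Finset.Ioc n ⌊(n : ℝ) + y⌋, f m.toNat * e (α * m)) * e (β * n) =
      (∑ n ∈ Finset.Icc 1 ⌊x⌋₊, f n * e ((α + β) * n)) *
        ∑ n ∈ Finset.Icc 1 ⌊y⌋₊, e (-β * n) := by
  set g : ℤ → ℂ := fun m => f m.toNat * e ((α + β) * m)
  have hwindow : ∀ n : ℤ, ⌊(n : ℝ) + y⌋ = n + ⌊y⌋₊ := fun n => by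
    rw [Int.floor_intCast_add, Int.natCast_floor_eq_floor hy.le]
  have hphase : ∀ (n : ℤ) (k : ℕ),
      e (α * (n + k : ℤ)) * e (β * n) = e ((α + β) * (n + k : ℤ)) * e (-β * k) := fun n k => by
    rw [← e_add, ← e_add]
    push_cast
    ring_nf
  calc _ = ∑' n : ℤ, ∑ k ∈ Icc 1 ⌊y⌋₊, g (n + k) * e (-β * k) := tsum_congr fun n => by
          rw [hwindow, Int.sum_Ioc_add_natCast, sum_mul]
          refine sum_congr rfl fun k _ => ?_
          rw [mul_assoc, hphase, ← mul_assoc]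
    _ = (∑' m : ℤ, g m) * ∑ k ∈ Icc 1 ⌊y⌋₊, e (-β * k) :=
          (summable_apply_toNat_mul hf fun m => e ((α + β) * m)).tsum_sum_comp_add_mul _ _ _
    _ = _ := by rw [tsum_apply_toNat_mul hf]; rfl

/-- **Lemma (Fourier transform of the short-interval sums).** For `x ≥ 1`, `y > 0`,
`f` supported on the integers of `[1,x]`, and real `α, β`:
`Σ_{n ∈ ℤ} (Σ_{n < m ≤ n+y} f(m) e(αm)) e(βn) = F(x; α+β) · E_y(-β)`,
where `F(x; γ) = Σ_{1 ≤ n ≤ x} f(n) e(γn)` and `E_y(γ) = Σ_{1 ≤ n ≤ y} e(γn)`.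
(The sum over `ℤ` has finitely many nonzero terms, hence is an unconditional `tsum`.) -/
theorem fourier_transform_short_interval_sum
    (x y : ℝ) (hx : 1 ≤ x) (hy : 0 < y) (f : ℕ → ℂ)
    (hf : ∀ m : ℕ, f m ≠ 0 → 1 ≤ m ∧ (m : ℝ) ≤ x) (α β : ℝ) :
    ∑' n : ℤ, (∑ m ∈ Finset.Ioc n ⌊(n : ℝ) + y⌋, f m.toNat * e (α * m)) * e (β * n) =
      (∑ n ∈ Finset.Icc 1 ⌊x⌋₊, f n * e ((α + β) * n)) *
        ∑ n ∈ Finset.Icc 1 ⌊y⌋₊, e (-β * n) :=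
  fourier_transform_short_interval_sum_general x y hy f hf α β
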